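/- arXiv:1404.6800 — 6 statements merged into one kernel-verified Lean document; each statement's English description precedes it below -/
import Mathlib

section
/- For every odd integer n ≥ 7, there exists a quasi-skew starter in Z_n; that is, a set of (n-1)/2 unordered pairs {x_i, y_i} of elements of Z_n such that the elements x_1,…,x_{(n-1)/2}, y_1,…,y_{(n-1)/2} are exactly the nonzero elements of Z_n, and the multiset {±(x_i + y_i) : 1 ≤ i ≤ (n-1)/2} is exactly the set of nonzero elements of Z_n. -/
/-!
Pair `1` with `p` and `q` with `r = p + q + 1`, where `p = (n ± 1) / 2` is odd, `q ≈ n / 4` is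
even and `q + r = n ± 1`, and cut the rest of `1, …, n - 1` into runs of consecutive pairs
`{a, a + 1}`. The sums `2a + 1` of the four runs are progressions of difference `4` which, up to
sign, hit every nonzero residue except `±1` and `±(p + 1)`; these are the sums `q + r` and `1 + p`
of the two exceptional pairs.
-/

/-- The multiset of all nonzero elements of `ZMod n`, each appearing exactly once. -/
def nonzeroZMod (n : ℕ) : Multiset (ZMod n) :=
  (Multiset.range (n - 1)).map (fun z => ((z + 1 : ℕ) : ZMod n))

/-- A quasi-skew starter in `Z_n`, given as a multiset `P` of (ordered representatives of)
unordered pairs `{x_i, y_i}`: the entries `x_i, y_i` are exactly the nonzero elements of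
`Z_n`, and the multiset `{±(x_i + y_i)}` is exactly the set of nonzero elements of `Z_n`. -/
def IsQuasiSkewStarter (n : ℕ) (P : Multiset (ZMod n × ZMod n)) : Prop :=
  (P.map Prod.fst + P.map Prod.snd) = nonzeroZMod n ∧
  (P.map (fun p => p.1 + p.2) + P.map (fun p => -(p.1 + p.2))) = nonzeroZMod n

theorem nodup_nonzeroZMod (n : ℕ) : (nonzeroZMod n).Nodup := by
  refine (Multiset.nodup_map_iff_inj_on (Multiset.nodup_range _)).2 fun x hx y hy hxy => ?_
  rw [Multiset.mem_range] at hx hy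
  rw [ZMod.natCast_eq_natCast_iff', Nat.mod_eq_of_lt (by omega), Nat.mod_eq_of_lt (by omega)]
    at hxy
  omega

theorem eq_nonzeroZMod_of_card_le {n : ℕ} {M : Multiset (ZMod n)} (hcard : M.card ≤ n - 1)
    (hmem : ∀ v, 0 < v → v < n → (v : ZMod n) ∈ M) : M = nonzeroZMod n := by
  refine (Multiset.eq_of_le_of_card_le ?_ (by simpa [nonzeroZMod] using hcard)).symm
  refine (Multiset.le_iff_subset (nodup_nonzeroZMod n)).2 fun x hx => ?_
  obtain ⟨z, hz, rfl⟩ := Multiset.mem_map.1 hx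
  exact hmem _ z.succ_pos (by rw [Multiset.mem_range] at hz; omega)

theorem natCast_eq_or_eq_neg_of_eq {n s w : ℕ}
    (h : s = w ∨ s = w + n ∨ s + w = n ∨ s + w = 2 * n) :
    (s : ZMod n) = w ∨ (s : ZMod n) = -w := by
  rcases h with rfl | rfl | h | h
  · exact .inl rfl
  · exact .inl (by simp)
  · exact .inr (eq_neg_of_add_eq_zero_left (by rw [← Nat.cast_add, h, ZMod.natCast_self]))
  · exact .inr (eq_neg_of_add_eq_zero_left (by simp [← Nat.cast_add, h]))

/-- Since the signed sums come in pairs `±s`, it suffices to hit `w` or `-w` for `2 * w ≤ n`. -/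
theorem isQuasiSkewStarter_map_natCast {n : ℕ} (Q : Multiset (ℕ × ℕ))
    (hcard : 2 * Q.card ≤ n - 1)
    (hentries : ∀ v, 0 < v → v < n → ∃ e ∈ Q, e.1 = v ∨ e.2 = v)
    (hsums : ∀ w, 0 < w → 2 * w ≤ n →
      ∃ e ∈ Q, ((e.1 + e.2 : ℕ) : ZMod n) = w ∨ ((e.1 + e.2 : ℕ) : ZMod n) = -w) :
    IsQuasiSkewStarter n (Q.map fun e => ((e.1 : ZMod n), (e.2 : ZMod n))) := by
  simp only [IsQuasiSkewStarter, Multiset.map_map, Function.comp_def]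
  constructor
  · refine eq_nonzeroZMod_of_card_le (by simpa [two_mul] using hcard) fun v hv hvn => ?_
    obtain ⟨e, he, h | h⟩ := hentries v hv hvn
    · exact Multiset.mem_add.2 (.inl (Multiset.mem_map.2 ⟨e, he, by rw [h]⟩))
    · exact Multiset.mem_add.2 (.inr (Multiset.mem_map.2 ⟨e, he, by rw [h]⟩))
  · refine eq_nonzeroZMod_of_card_le (by simpa [two_mul] using hcard) fun w hw hwn => ?_
    obtain ⟨e, he, h⟩ : ∃ e ∈ Q,
        ((e.1 + e.2 : ℕ) : ZMod n) = w ∨ ((e.1 + e.2 : ℕ) : ZMod n) = -w := by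
      rcases le_or_gt (2 * w) n with hle | hgt
      · exact hsums w hw hle
      · obtain ⟨e, he, hs⟩ := hsums (n - w) (by omega) (by omega)
        rw [Nat.cast_sub hwn.le, ZMod.natCast_self, zero_sub, neg_neg] at hs
        exact ⟨e, he, hs.symm⟩
    push_cast at h
    rcases h with h | h
    · exact Multiset.mem_add.2 (.inl (Multiset.mem_map.2 ⟨e, he, h⟩))
    · exact Multiset.mem_add.2 (.inr (Multiset.mem_map.2 ⟨e, he, neg_eq_iff_eq_neg.2 h⟩))

theorem List.mem_range'_two_iff {a s L : ℕ} :
    a ∈ List.range' s L 2 ↔ s ≤ a ∧ a < s + 2 * L ∧ a % 2 = s % 2 := by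
  rw [List.mem_range']
  constructor
  · rintro ⟨i, hi, rfl⟩
    omega
  · intro h
    exact ⟨(a - s) / 2, by omega, by omega⟩

/-- The smaller entries of the consecutive pairs filling `[2, q)`, `(q, p)`, `(p, p + q + 1)` and
`(p + q + 1, n)`. -/
def blockLeftEnds (n p q : ℕ) : List ℕ :=
  List.range' 2 ((q - 2) / 2) 2 ++ List.range' (q + 1) ((p - q - 1) / 2) 2 ++
    List.range' (p + 1) (q / 2) 2 ++ List.range' (p + q + 2) ((n - p - q - 2) / 2) 2

def blockStarter (n p q : ℕ) : Multiset (ℕ × ℕ) :=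
  (1, p) ::ₘ (q, p + q + 1) ::ₘ
    ((blockLeftEnds n p q).map fun a => (a, a + 1) : List (ℕ × ℕ))

section blockStarter

variable {n p q : ℕ}

theorem mem_blockLeftEnds_iff (hn : Odd n) (hp : Odd p) (hq : Even q) {a : ℕ} :
    a ∈ blockLeftEnds n p q ↔
      (2 ≤ a ∧ a < q ∧ a % 2 = 0) ∨ (q < a ∧ a < p ∧ a % 2 = 1) ∨
      (p < a ∧ a < p + q + 1 ∧ a % 2 = 0) ∨ (p + q + 1 < a ∧ a < n ∧ a % 2 = 1) := by
  rw [Nat.odd_iff] at hn hp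
  rw [Nat.even_iff] at hq
  simp only [blockLeftEnds, List.mem_append, List.mem_range'_two_iff, or_assoc]
  omega

theorem pair_mem_blockStarter {a : ℕ} (ha : a ∈ blockLeftEnds n p q) :
    (a, a + 1) ∈ blockStarter n p q := by
  simp only [blockStarter, Multiset.mem_cons, Multiset.mem_coe, List.mem_map]
  exact .inr (.inr ⟨a, ha, rfl⟩)

theorem two_mul_card_blockStarter (hn : Odd n) (hp : Odd p) (hq : Even q) (hq2 : 2 ≤ q)
    (hqp : q < p) (hpn : p + q + 1 < n) : 2 * (blockStarter n p q).card = n - 1 := by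
  rw [Nat.odd_iff] at hn hp
  rw [Nat.even_iff] at hq
  simp only [blockStarter, blockLeftEnds, Multiset.card_cons, Multiset.coe_card,
    List.length_map, List.length_append, List.length_range']
  omega

theorem exists_blockStarter_entry (hn : Odd n) (hp : Odd p) (hq : Even q) {v : ℕ} (hv : 0 < v)
    (hvn : v < n) : ∃ e ∈ blockStarter n p q, e.1 = v ∨ e.2 = v := by
  by_cases hleft : v ∈ blockLeftEnds n p q
  · exact ⟨_, pair_mem_blockStarter hleft, .inl rfl⟩
  by_cases hright : v - 1 ∈ blockLeftEnds n p q
  · exact ⟨_, pair_mem_blockStarter hright, .inr (by omega)⟩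
  rw [mem_blockLeftEnds_iff hn hp hq] at hleft hright
  rw [Nat.odd_iff] at hn hp
  rw [Nat.even_iff] at hq
  obtain rfl | rfl | rfl | rfl : v = 1 ∨ v = p ∨ v = q ∨ v = p + q + 1 := by omega
  all_goals simp [blockStarter]

theorem exists_blockStarter_sum (hn : Odd n) (hp : Odd p) (hq : Even q)
    (hpn : 2 * p = n - 1 ∨ 2 * p = n + 1) (hqn : p + 2 * q = n - 2 ∨ p + 2 * q = n)
    {w : ℕ} (hw : 0 < w) (hwn : 2 * w ≤ n) : ∃ e ∈ blockStarter n p q,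
      ((e.1 + e.2 : ℕ) : ZMod n) = w ∨ ((e.1 + e.2 : ℕ) : ZMod n) = -w := by
  suffices ∃ e ∈ blockStarter n p q, e.1 + e.2 = w ∨ e.1 + e.2 = w + n ∨
      e.1 + e.2 + w = n ∨ e.1 + e.2 + w = 2 * n by
    obtain ⟨e, he, hs⟩ := this
    exact ⟨e, he, natCast_eq_or_eq_neg_of_eq hs⟩
  have hmem := fun a => mem_blockLeftEnds_iff hn hp hq (a := a)
  rw [Nat.odd_iff] at hn hp
  rw [Nat.even_iff] at hq
  obtain ⟨j, rfl | rfl⟩ := Nat.even_or_odd' w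
  -- `n / 2 - j` and `n / 2 + j` have the same parity: if odd, the first lies in `(q, p)`,
  -- if even, the second lies in `(p, p + q + 1)`.
  · by_cases hj : (n / 2 - j) % 2 = 0
    · exact ⟨_, pair_mem_blockStarter ((hmem (n / 2 + j)).2 (by omega)), by omega⟩
    · exact ⟨_, pair_mem_blockStarter ((hmem (n / 2 - j)).2 (by omega)), by omega⟩
  · by_cases hj : j % 2 = 0
    · obtain rfl | hj' | hj' : j = 0 ∨ (2 ≤ j ∧ j < q) ∨ 2 * j + 2 + p = n := by omega
      · exact ⟨(q, p + q + 1), by simp [blockStarter], by omega⟩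
      · exact ⟨_, pair_mem_blockStarter ((hmem j).2 (by omega)), by omega⟩
      · exact ⟨(1, p), by simp [blockStarter], by omega⟩
    · obtain hj' | hj' : p + q + 1 < n - j - 1 ∨ 2 * j + 2 + p = n := by omega
      · exact ⟨_, pair_mem_blockStarter ((hmem (n - j - 1)).2 (by omega)), by omega⟩
      · exact ⟨(1, p), by simp [blockStarter], by omega⟩

theorem isQuasiSkewStarter_blockStarter (hn : Odd n) (hp : Odd p) (hq : Even q) (hq2 : 2 ≤ q)
    (hpn : 2 * p = n - 1 ∨ 2 * p = n + 1) (hqn : p + 2 * q = n - 2 ∨ p + 2 * q = n) :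
    IsQuasiSkewStarter n ((blockStarter n p q).map fun e => ((e.1 : ZMod n), (e.2 : ZMod n))) :=
  isQuasiSkewStarter_map_natCast _
    ((two_mul_card_blockStarter hn hp hq hq2 (by omega) (by omega)).le)
    (fun _ hv hvn => exists_blockStarter_entry hn hp hq hv hvn)
    (fun _ hw hwn => exists_blockStarter_sum hn hp hq hpn hqn hw hwn)

end blockStarter

/-- For every odd integer `n ≥ 7` there exists a quasi-skew starter in `Z_n`. -/
theorem exists_quasiSkewStarter (n : ℕ) (hn : 7 ≤ n) (hodd : Odd n) :
    ∃ P : Multiset (ZMod n × ZMod n), IsQuasiSkewStarter n P := by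
  have hodd_mod := Nat.odd_iff.1 hodd
  refine ⟨_, isQuasiSkewStarter_blockStarter (p := 2 * (n / 4) + 1) (q := 2 * ((n + 1) / 8))
    hodd (Nat.odd_iff.2 (by omega)) (Nat.even_iff.2 (by omega)) (by omega) (by omega) (by omega)⟩
end

section
/- For n = 2s+1 with s ≡ 0 (mod 8) and s ≥ 16, the following s pairs form a quasi-skew starter in Z_n: {i, i+s} for i ∈ [1, s/2−1] \ {s/8+1, s/4}; {i+s/2+1, i−s/2−1} for i ∈ [2, s/2−1] \ {3s/8+1}; together with the six pairs {s/2, s/2+1}, {5s/4, 3s/2}, {s/8+1, 15s/8+1}, {3s/2+1, 2s}, {s/4, s/2+2}, {7s/8+2, 9s/8+1}. -/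
open Multiset

theorem nonzeroZMod_eq_map_Ico (n : ℕ) : nonzeroZMod n = (Ico 1 n).map Nat.cast := by
  rcases n with _ | n
  · rfl
  · have hIco : Ico 1 (n + 1) = (Ico 0 n).map (· + 1) := by rw [map_add_right_Ico, zero_add]
    rw [nonzeroZMod, Nat.add_sub_cancel, ← Finset.range_val, Finset.range_eq_Ico,
      ← Multiset.Ico, hIco, map_map]
    rfl

theorem IsQuasiSkewStarter.of_natCast {n : ℕ} {P : Multiset (ZMod n × ZMod n)} (L : Multiset ℕ)
    (hE : P.map Prod.fst + P.map Prod.snd = (Ico 1 n).map Nat.cast)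
    (hL : P.map (fun p => p.1 + p.2) = L.map Nat.cast)
    (hLL : L + L.map (n - ·) = Ico 1 n) : IsQuasiSkewStarter n P := by
  have hneg : P.map (fun p => -(p.1 + p.2)) = (L.map (n - ·)).map Nat.cast := by
    have h := congrArg (map Neg.neg) hL
    simp only [map_map, Function.comp_def] at h
    rw [h, map_map]
    refine map_congr rfl fun m hm => ?_
    have hmn : m < n := (mem_Ico.1 (hLL ▸ mem_add.2 (Or.inl hm))).2
    simp [Nat.cast_sub hmn.le]
  rw [IsQuasiSkewStarter, nonzeroZMod_eq_map_Ico, hneg, hL, ← map_add, hLL]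
  exact ⟨hE, rfl⟩

theorem ZMod.natCast_add_natCast_eq_of_eq_add_mul {n a b c : ℕ} (k : ℕ)
    (h : a + b = c + k * n) : (a : ZMod n) + b = c := by
  rw [← Nat.cast_add, h]
  simp

theorem Multiset.mem_map_iff_of_leftInvOn {α β : Type*} {f : α → β} {g : β → α}
    {M : Multiset α} (h : ∀ a ∈ M, g (f a) = a) (b : β) :
    b ∈ M.map f ↔ g b ∈ M ∧ f (g b) = b := by
  rw [mem_map]
  constructor
  · rintro ⟨a, ha, rfl⟩
    rw [h a ha]
    exact ⟨ha, rfl⟩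
  · rintro ⟨hg, hfg⟩
    exact ⟨g b, hg, hfg⟩

theorem Nat.multiset_eq_Ico_of_forall_mem_of_card_le {M : Multiset ℕ} {a b : ℕ}
    (hmem : ∀ x, a ≤ x → x < b → x ∈ M) (hcard : card M ≤ b - a) : M = Ico a b := by
  refine (eq_of_le_of_card_le ((le_iff_subset nodup_Ico).2 fun x hx => ?_) ?_).symm
  · exact hmem x (mem_Ico.1 hx).1 (mem_Ico.1 hx).2
  · simpa [Multiset.Ico] using hcard

section Starter

variable {s : ℕ}

def firstIndices (s : ℕ) : Finset ℕ := Finset.Icc 1 (s / 2 - 1) \ {s / 8 + 1, s / 4}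

def secondIndices (s : ℕ) : Finset ℕ := Finset.Icc 2 (s / 2 - 1) \ {3 * s / 8 + 1}

theorem mem_firstIndices {i : ℕ} :
    i ∈ firstIndices s ↔ 1 ≤ i ∧ i ≤ s / 2 - 1 ∧ i ≠ s / 8 + 1 ∧ i ≠ s / 4 := by
  simp [firstIndices, and_assoc]

theorem mem_secondIndices {i : ℕ} :
    i ∈ secondIndices s ↔ 2 ≤ i ∧ i ≤ s / 2 - 1 ∧ i ≠ 3 * s / 8 + 1 := by
  simp [secondIndices, and_assoc]

theorem card_firstIndices (hs : 16 ≤ s) (h8 : s % 8 = 0) : (firstIndices s).card = s / 2 - 3 := by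
  rw [firstIndices, Finset.card_sdiff_of_subset, Nat.card_Icc, Finset.card_pair (by omega)]
  · omega
  · intro x
    simp only [Finset.mem_insert, Finset.mem_singleton, Finset.mem_Icc]
    omega

theorem card_secondIndices (hs : 16 ≤ s) (h8 : s % 8 = 0) :
    (secondIndices s).card = s / 2 - 3 := by
  rw [secondIndices, Finset.card_sdiff_of_subset, Nat.card_Icc, Finset.card_singleton]
  · omega
  · intro x
    simp only [Finset.mem_singleton, Finset.mem_Icc]
    omega

theorem starterElements_eq (hs : 16 ≤ s) (h8 : s % 8 = 0) :
    (firstIndices s).val + (secondIndices s).val.map (fun i => i + s / 2 + 1)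
      + {s / 2, 5 * s / 4, s / 8 + 1, 3 * s / 2 + 1, s / 4, 7 * s / 8 + 2}
      + ((firstIndices s).val.map (fun i => i + s)
        + (secondIndices s).val.map (fun i => i + 3 * s / 2)
        + {s / 2 + 1, 3 * s / 2, 15 * s / 8 + 1, 2 * s, s / 2 + 2, 9 * s / 8 + 1})
      = Ico 1 (2 * s + 1) := by
  apply Nat.multiset_eq_Ico_of_forall_mem_of_card_le
  · intro x _ _
    simp only [mem_add,
      mem_map_iff_of_leftInvOn (f := fun i => i + s / 2 + 1) (g := fun y => y - s / 2 - 1)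
        (fun _ _ => by omega),
      mem_map_iff_of_leftInvOn (f := fun i => i + s) (g := fun y => y - s) (fun _ _ => by omega),
      mem_map_iff_of_leftInvOn (f := fun i => i + 3 * s / 2) (g := fun y => y - 3 * s / 2)
        (fun _ _ => by omega),
      Finset.mem_val, mem_firstIndices, mem_secondIndices, insert_eq_cons, mem_cons, mem_singleton]
    omega
  · simp only [card_add, card_map, Finset.card_val, card_firstIndices hs h8,
      card_secondIndices hs h8, insert_eq_cons, card_cons, card_singleton]
    omega

-- natural representatives of the sums `x + y` of the pairs of the starter
def starterSums (s : ℕ) : Multiset ℕ :=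
  (firstIndices s).val.map (fun i => 2 * i + s) + (secondIndices s).val.map (fun i => 2 * i)
    + {s + 1, 3 * s / 4 - 1, 1, 3 * s / 2, 3 * s / 4 + 2, 2}

theorem starterSums_add_map_sub (hs : 16 ≤ s) (h8 : s % 8 = 0) :
    starterSums s + (starterSums s).map (2 * s + 1 - ·) = Ico 1 (2 * s + 1) := by
  have h₁ := mem_map_iff_of_leftInvOn (M := (firstIndices s).val) (f := fun i => 2 * i + s)
    (g := fun y => (y - s) / 2) (fun _ _ => by omega)
  have h₂ := mem_map_iff_of_leftInvOn (M := (secondIndices s).val) (f := fun i => 2 * i)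
    (g := fun y => y / 2) (fun _ _ => by omega)
  have hbound : ∀ m ∈ starterSums s, m ≤ 2 * s + 1 := by
    intro m hm
    simp only [starterSums, mem_add, h₁, h₂, Finset.mem_val, mem_firstIndices,
      mem_secondIndices, insert_eq_cons, mem_cons, mem_singleton] at hm
    omega
  apply Nat.multiset_eq_Ico_of_forall_mem_of_card_le
  · intro x _ _
    rw [mem_add, mem_map_iff_of_leftInvOn (g := (2 * s + 1 - ·))
      (fun m hm => by have := hbound m hm; omega)]
    simp only [starterSums, mem_add, h₁, h₂, Finset.mem_val, mem_firstIndices,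
      mem_secondIndices, insert_eq_cons, mem_cons, mem_singleton]
    omega
  · simp only [starterSums, card_add, card_map, Finset.card_val, card_firstIndices hs h8,
      card_secondIndices hs h8, insert_eq_cons, card_cons, card_singleton]
    omega

end Starter

/-- For `n = 2s+1` with `s ≡ 0 (mod 8)`, `s ≥ 16`, the pairs
`{i, i+s}` for `i ∈ [1, s/2−1] \ {s/8+1, s/4}`,
`{i+s/2+1, i−s/2−1}` for `i ∈ [2, s/2−1] \ {3s/8+1}`, together with
`{s/2, s/2+1}, {5s/4, 3s/2}, {s/8+1, 15s/8+1}, {3s/2+1, 2s}, {s/4, s/2+2}, {7s/8+2, 9s/8+1}`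
form a quasi-skew starter in `Z_{2s+1}`. -/
theorem quasiSkewStarter_of_eight_dvd (s : ℕ) (hs : 16 ≤ s) (h8 : s % 8 = 0) :
    IsQuasiSkewStarter (2 * s + 1)
      ((((Finset.Icc 1 (s / 2 - 1)) \ {s / 8 + 1, s / 4}).val.map
          (fun (i : ℕ) =>
            (((i : ℕ) : ZMod (2 * s + 1)), (((i + s : ℕ)) : ZMod (2 * s + 1))))) +
       (((Finset.Icc 2 (s / 2 - 1)) \ {3 * s / 8 + 1}).val.map
          (fun (i : ℕ) =>
            ((((i + s / 2 + 1 : ℕ)) : ZMod (2 * s + 1)),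
              ((i : ℕ) : ZMod (2 * s + 1)) - (((s / 2 + 1 : ℕ)) : ZMod (2 * s + 1))))) +
       ({(((s / 2 : ℕ) : ZMod (2 * s + 1)), ((s / 2 + 1 : ℕ) : ZMod (2 * s + 1))),
         (((5 * s / 4 : ℕ) : ZMod (2 * s + 1)), ((3 * s / 2 : ℕ) : ZMod (2 * s + 1))),
         (((s / 8 + 1 : ℕ) : ZMod (2 * s + 1)), ((15 * s / 8 + 1 : ℕ) : ZMod (2 * s + 1))),
         (((3 * s / 2 + 1 : ℕ) : ZMod (2 * s + 1)), ((2 * s : ℕ) : ZMod (2 * s + 1))),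
         (((s / 4 : ℕ) : ZMod (2 * s + 1)), ((s / 2 + 2 : ℕ) : ZMod (2 * s + 1))),
         (((7 * s / 8 + 2 : ℕ) : ZMod (2 * s + 1)), ((9 * s / 8 + 1 : ℕ) : ZMod (2 * s + 1)))} :
           Multiset (ZMod (2 * s + 1) × ZMod (2 * s + 1)))) := by
  rw [← firstIndices.eq_1, ← secondIndices.eq_1]
  refine .of_natCast (starterSums s) ?_ ?_ (starterSums_add_map_sub hs h8)
  · rw [← starterElements_eq hs h8]
    simp only [map_add, map_map, Function.comp_def, insert_eq_cons, map_cons, map_singleton]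
    congr 3
    refine map_congr rfl fun i _ => ?_
    rw [eq_comm, eq_sub_iff_add_eq]
    exact ZMod.natCast_add_natCast_eq_of_eq_add_mul 1 (by omega)
  · simp only [starterSums, map_add, map_map, Function.comp_def, insert_eq_cons, map_cons,
      map_singleton]
    congr 2
    · exact map_congr rfl fun i _ => by push_cast; ring
    · exact map_congr rfl fun i _ => by push_cast; ring
    · exact ZMod.natCast_add_natCast_eq_of_eq_add_mul 0 (by omega)
    congr 5
    · exact ZMod.natCast_add_natCast_eq_of_eq_add_mul 1 (by omega)
    · exact ZMod.natCast_add_natCast_eq_of_eq_add_mul 1 (by omega)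
    · exact ZMod.natCast_add_natCast_eq_of_eq_add_mul 1 (by omega)
    · exact ZMod.natCast_add_natCast_eq_of_eq_add_mul 0 (by omega)
    · exact ZMod.natCast_add_natCast_eq_of_eq_add_mul 1 (by omega)
end

section
/- There is no 3-SCHGDD of type (5, 1^4); that is, there do not exist 10 base blocks (3-subsets of I_5 × Z_4) on the point set I_5 × Z_4 with groups {i} × Z_4 and holes I_5 × {j}, whose development under adding 1 mod 4 to the second coordinate yields a 3-HGDD of type (5, 1^4). -/
/-!
Since `nonHoleDiffs 1 4 = {1, 2, 3}`, the conditions on `B` say exactly that the sets of cells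
`(i, j, d)` realised by the blocks partition the 60 cells with `i ≠ j`, `d ≠ 0`: an exact cover
problem. Every block meets each group and each hole at most once, and translating it so that one
point lies in hole `0` does not change its cells, so only 60 different cell sets occur. A
depth-first search over these, with cell sets encoded as bitmasks and run in the kernel, finds no
exact cover.
-/

/-- The multiset of differences `Δ_{ij}(B)`: for each base block `b ∈ B`, all differences
`x − y` over ordered pairs of distinct points `(i,x), (j,y) ∈ b`. -/
def blockDelta {n M : ℕ} (B : Multiset (Finset (Fin n × ZMod M))) (i j : Fin n) :
    Multiset (ZMod M) :=
  B.bind (fun b =>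
    ((b.val ×ˢ b.val).filter (fun p => p.1.1 = i ∧ p.2.1 = j ∧ p.1 ≠ p.2)).map
      (fun p => p.1.2 - p.2.2))

/-- The subgroup `S = {0, t, …, (m−1)t}` of `Z_{mt}` as a multiset. -/
def holeMultiples (m t : ℕ) : Multiset (ZMod (m * t)) :=
  (Multiset.range m).map (fun c => ((c * t : ℕ) : ZMod (m * t)))

/-- The multiset `Z_{mt} \ S`, each element once. -/
def nonHoleDiffs (m t : ℕ) : Multiset (ZMod (m * t)) :=
  ((Multiset.range (m * t)).map (fun z => (z : ZMod (m * t)))).filter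
    (fun z => z ∉ holeMultiples m t)

/-- A semi-cyclic `k`-HGDD of type `(n, m^t)`, given by its multiset `B` of base blocks
(`k`-subsets of `I_n × Z_{mt}`): developing by `+1` on second coordinates yields a
`k`-HGDD with groups `{i} × Z_{mt}` and holes `I_n × (S + l)`; equivalently,
`Δ_{ij}(B) = Z_{mt} \ S` for `i ≠ j` and `Δ_{ii}(B) = ∅`. -/
def IsSCHGDD (k n m t : ℕ) (B : Multiset (Finset (Fin n × ZMod (m * t)))) : Prop :=
  (∀ b ∈ B, b.card = k) ∧
  (∀ i j : Fin n, i ≠ j → blockDelta B i j = nonHoleDiffs m t) ∧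
  (∀ i : Fin n, blockDelta B i i = 0)

open Finset

namespace Nat

theorem testBit_sum_two_pow (s : Finset ℕ) (k : ℕ) : (∑ i ∈ s, 2 ^ i).testBit k ↔ k ∈ s := by
  rw [← mem_bitIndices, ← List.mem_toFinset, toFinset_bitIndices_sum_two_pow]

end Nat

def IsExactCover (opts : List ℕ) (target : ℕ) (M : Multiset ℕ) : Prop :=
  (∀ m ∈ M, m ∈ opts) ∧ ∀ k, M.countP (·.testBit k) = (target.testBit k).toNat

namespace IsExactCover

variable {opts : List ℕ} {r m : ℕ} {M : Multiset ℕ}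

theorem testBit_of_cons (h : IsExactCover opts r (m ::ₘ M)) {k : ℕ} (hk : m.testBit k) :
    r.testBit k := by
  have := h.2 k
  rw [Multiset.countP_cons] at this
  cases hr : r.testBit k <;> simp_all

theorem land_eq_of_cons (h : IsExactCover opts r (m ::ₘ M)) : m &&& r = m :=
  Nat.eq_of_testBit_eq fun k => by
    rw [Nat.testBit_land]
    cases hk : m.testBit k
    · rfl
    · simp [h.testBit_of_cons hk]

theorem xor_of_cons (h : IsExactCover opts r (m ::ₘ M)) : IsExactCover opts (r ^^^ m) M := by
  refine ⟨fun m' hm' => h.1 m' (Multiset.mem_cons_of_mem hm'), fun k => ?_⟩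
  have hk := h.2 k
  rw [Multiset.countP_cons] at hk
  rw [Nat.testBit_xor]
  cases hm : m.testBit k <;> cases hr : r.testBit k <;> simp_all

end IsExactCover

def hasExactCover (opts : List ℕ) : List ℕ → ℕ → Bool
  | [], r => r == 0
  | c :: cs, r =>
    if r.testBit c then
      (opts.filter (·.testBit c)).any fun m => m &&& r == m && hasExactCover opts cs (r ^^^ m)
    else hasExactCover opts cs r

theorem hasExactCover_of_isExactCover {opts cs : List ℕ} {r : ℕ} {M : Multiset ℕ}
    (h : IsExactCover opts r M) (hcs : ∀ k, r.testBit k → k ∈ cs) :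
    hasExactCover opts cs r = true := by
  induction cs generalizing r M with
  | nil =>
    have : r = 0 := Nat.eq_of_testBit_eq fun k => by
      simpa using fun hk => hcs k hk
    simp [hasExactCover, this]
  | cons c cs ih =>
    by_cases hc : r.testBit c
    · obtain ⟨m, hmM, hmc⟩ : ∃ m ∈ M, m.testBit c := by
        have := h.2 c
        rw [hc] at this
        exact Multiset.countP_pos.mp (by simp [this])
      obtain ⟨M, rfl⟩ := Multiset.exists_cons_of_mem hmM
      have hrest : ∀ k, (r ^^^ m).testBit k → k ∈ cs := fun k hk => by
        rw [Nat.testBit_xor] at hk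
        have hkc : k ≠ c := by rintro rfl; simp [hc, hmc] at hk
        cases hmk : m.testBit k
        · simp only [hmk, Bool.xor_false] at hk
          exact (List.mem_cons.mp (hcs k hk)).resolve_left hkc
        · simp [h.testBit_of_cons hmk, hmk] at hk
      simp only [hasExactCover, hc, if_true, List.any_eq_true, List.mem_filter, Bool.and_eq_true,
        beq_iff_eq]
      exact ⟨m, ⟨h.1 m hmM, hmc⟩, h.land_eq_of_cons, ih h.xor_of_cons hrest⟩
    · simp only [hasExactCover, hc]
      exact ih h fun k hk => (List.mem_cons.mp (hcs k hk)).resolve_left (by rintro rfl; simp_all)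

section Cells

variable {n M : ℕ}

def cellEquiv [NeZero M] : Fin n × Fin n × ZMod M ≃ Fin (n * n * M) :=
  (Equiv.prodAssoc _ _ _).symm.trans <|
    (Equiv.prodCongr finProdFinEquiv (ZMod.finEquiv M).symm.toEquiv).trans finProdFinEquiv

def cellIndex [NeZero M] (c : Fin n × Fin n × ZMod M) : ℕ := cellEquiv c

theorem cellIndex_injective [NeZero M] : Function.Injective (cellIndex (n := n) (M := M)) :=
  Fin.val_injective.comp cellEquiv.injective

theorem cellIndex_lt [NeZero M] (c : Fin n × Fin n × ZMod M) : cellIndex c < n * n * M :=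
  (cellEquiv c).isLt

def cellMask [NeZero M] (s : Finset (Fin n × Fin n × ZMod M)) : ℕ := ∑ c ∈ s, 2 ^ cellIndex c

theorem testBit_cellMask [NeZero M] (s : Finset (Fin n × Fin n × ZMod M)) (k : ℕ) :
    (cellMask s).testBit k ↔ ∃ c ∈ s, cellIndex c = k := by
  rw [cellMask, ← Finset.sum_image fun _ _ _ _ h => cellIndex_injective h,
    Nat.testBit_sum_two_pow, Finset.mem_image]

theorem lt_of_testBit_cellMask [NeZero M] {s : Finset (Fin n × Fin n × ZMod M)} {k : ℕ}
    (h : (cellMask s).testBit k) : k < n * n * M := by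
  obtain ⟨c, -, rfl⟩ := (testBit_cellMask s k).mp h
  exact cellIndex_lt c

def deltaCells (b : Finset (Fin n × ZMod M)) : Finset (Fin n × Fin n × ZMod M) :=
  b.offDiag.image fun pq => (pq.1.1, pq.2.1, pq.1.2 - pq.2.2)

theorem mem_deltaCells {b : Finset (Fin n × ZMod M)} {c : Fin n × Fin n × ZMod M} :
    c ∈ deltaCells b ↔ ∃ p ∈ b, ∃ q ∈ b, p ≠ q ∧ (p.1, q.1, p.2 - q.2) = c := by
  simp [deltaCells, and_assoc]

end Cells

section Delta

variable {n M : ℕ} {B : Multiset (Finset (Fin n × ZMod M))}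

theorem sub_mem_blockDelta {b : Finset (Fin n × ZMod M)} {p q : Fin n × ZMod M} (hb : b ∈ B)
    (hp : p ∈ b) (hq : q ∈ b) (hpq : p ≠ q) : p.2 - q.2 ∈ blockDelta B p.1 q.1 := by
  simp only [blockDelta, Multiset.mem_bind, Multiset.mem_map, Multiset.mem_filter,
    Multiset.mem_product]
  exact ⟨b, hb, (p, q), ⟨⟨hp, hq⟩, rfl, rfl, hpq⟩, rfl⟩

theorem blockDelta_cons (b : Finset (Fin n × ZMod M)) (i j : Fin n) :
    blockDelta (b ::ₘ B) i j = blockDelta {b} i j + blockDelta B i j := by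
  simp [blockDelta]

theorem count_blockDelta_singleton {b : Finset (Fin n × ZMod M)}
    (hb : Set.InjOn Prod.fst (b : Set (Fin n × ZMod M))) (i j : Fin n) (d : ZMod M) :
    (blockDelta {b} i j).count d = if (i, j, d) ∈ deltaCells b then 1 else 0 := by
  set S := (b ×ˢ b).filter fun pq => d = pq.1.2 - pq.2.2 ∧ pq.1.1 = i ∧ pq.2.1 = j ∧ pq.1 ≠ pq.2
  have hcount : (blockDelta {b} i j).count d = #S := by
    simp only [blockDelta, Multiset.singleton_bind, Multiset.count_map, Multiset.filter_filter]
    rfl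
  have hS : #S ≤ 1 := Finset.card_le_one.mpr fun x hx y hy => by
    simp only [S, Finset.mem_filter, Finset.mem_product] at hx hy
    exact Prod.ext (hb hx.1.1 hy.1.1 (hx.2.2.1.trans hy.2.2.1.symm))
      (hb hx.1.2 hy.1.2 (hx.2.2.2.1.trans hy.2.2.2.1.symm))
  have hmem : (i, j, d) ∈ deltaCells b ↔ S.Nonempty := by
    simp only [mem_deltaCells, Prod.mk.injEq, Finset.Nonempty, S, Finset.mem_filter,
      Finset.mem_product, Prod.exists]
    grind
  rw [hcount]
  split_ifs with h
  · exact le_antisymm hS (Finset.card_pos.mpr (hmem.mp h))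
  · exact Finset.card_eq_zero.mpr (Finset.not_nonempty_iff_eq_empty.mp (mt hmem.mpr h))

theorem count_blockDelta (hB : ∀ b ∈ B, Set.InjOn Prod.fst (b : Set (Fin n × ZMod M)))
    (i j : Fin n) (d : ZMod M) :
    (blockDelta B i j).count d = B.countP fun b => (i, j, d) ∈ deltaCells b := by
  induction B using Multiset.induction_on with
  | empty => simp [blockDelta]
  | cons b B ih =>
    rw [blockDelta_cons, Multiset.count_add, count_blockDelta_singleton (hB b (by simp)),
      ih fun b' hb' => hB b' (Multiset.mem_cons_of_mem hb'), Multiset.countP_cons]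
    omega

theorem isExactCover_map_cellMask_deltaCells [NeZero M] {opts : List ℕ}
    {T : Finset (Fin n × Fin n × ZMod M)} (hopts : ∀ b ∈ B, cellMask (deltaCells b) ∈ opts)
    (hB : ∀ b ∈ B, Set.InjOn Prod.fst (b : Set (Fin n × ZMod M)))
    (hT : ∀ i j d, (blockDelta B i j).count d = if (i, j, d) ∈ T then 1 else 0) :
    IsExactCover opts (cellMask T) (B.map fun b => cellMask (deltaCells b)) := by
  refine ⟨Multiset.forall_mem_map_iff.mpr hopts, fun k => ?_⟩
  rw [Multiset.countP_map, ← Multiset.countP_eq_card_filter]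
  by_cases hk : ∃ c : Fin n × Fin n × ZMod M, cellIndex c = k
  · obtain ⟨c, rfl⟩ := hk
    have hbit (s : Finset (Fin n × Fin n × ZMod M)) :
        (cellMask s).testBit (cellIndex c) = decide (c ∈ s) :=
      Bool.eq_iff_iff.mpr (by simp [testBit_cellMask, cellIndex_injective.eq_iff])
    simp only [hbit, decide_eq_true_eq]
    rw [← count_blockDelta hB, hT]
    by_cases hc : c ∈ T <;> simp [hc]
  · have hbit (s : Finset (Fin n × Fin n × ZMod M)) : (cellMask s).testBit k = false :=
      Bool.eq_false_iff.mpr fun h =>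
        hk <| let ⟨c, _, hc⟩ := (testBit_cellMask s k).mp h; ⟨c, hc⟩
    simp [hbit]

theorem injOn_fst_of_blockDelta_self {b : Finset (Fin n × ZMod M)}
    (h : ∀ i, blockDelta B i i = 0) (hb : b ∈ B) :
    Set.InjOn Prod.fst (b : Set (Fin n × ZMod M)) := fun p hp q hq hpq =>
  by_contra fun hne => by simpa [hpq, h] using sub_mem_blockDelta hb hp hq hne

theorem injOn_snd_of_zero_notMem_blockDelta {b : Finset (Fin n × ZMod M)}
    (h : ∀ i j, (0 : ZMod M) ∉ blockDelta B i j) (hb : b ∈ B) :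
    Set.InjOn Prod.snd (b : Set (Fin n × ZMod M)) := fun p hp q hq hpq =>
  by_contra fun hne => h p.1 q.1 (by simpa [hpq] using sub_mem_blockDelta hb hp hq hne)

end Delta

section Triangles

variable {n M : ℕ}

theorem deltaCells_image_sub (b : Finset (Fin n × ZMod M)) (t : ZMod M) :
    deltaCells (b.image fun p => (p.1, p.2 - t)) = deltaCells b := by
  ext c
  simp only [mem_deltaCells, Finset.mem_image]
  constructor
  · rintro ⟨_, ⟨p, hp, rfl⟩, _, ⟨q, hq, rfl⟩, hpq, rfl⟩
    exact ⟨p, hp, q, hq, fun h => hpq (h ▸ rfl), by simp⟩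
  · rintro ⟨p, hp, q, hq, hpq, rfl⟩
    refine ⟨_, ⟨p, hp, rfl⟩, _, ⟨q, hq, rfl⟩, fun h => hpq ?_, by simp⟩
    simp only [Prod.mk.injEq, sub_left_inj] at h
    exact Prod.ext h.1 h.2

-- Each triangle is listed six times (which point sits in hole `0`, and in which order the other
-- two come); without `dedup` the search would branch over every copy.
def triangleMasks (n M : ℕ) [NeZero M] : List ℕ :=
  List.dedup <|
    (List.finRange n ×ˢ List.finRange n ×ˢ List.finRange n ×ˢ List.range M ×ˢ
      List.range M).filterMap fun (a, b, c, u, v) =>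
        if a ≠ b ∧ a ≠ c ∧ b ≠ c ∧ u ≠ 0 ∧ v ≠ 0 ∧ u ≠ v then
          some (cellMask (deltaCells {(a, 0), (b, (u : ZMod M)), (c, (v : ZMod M))}))
        else none

theorem cellMask_deltaCells_mem_triangleMasks [NeZero M] {b : Finset (Fin n × ZMod M)}
    (hcard : #b = 3) (hfst : Set.InjOn Prod.fst (b : Set (Fin n × ZMod M)))
    (hsnd : Set.InjOn Prod.snd (b : Set (Fin n × ZMod M))) :
    cellMask (deltaCells b) ∈ triangleMasks n M := by
  obtain ⟨x, y, z, hxy, hxz, hyz, rfl⟩ := Finset.card_eq_three.mp hcard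
  have hx : x ∈ ({x, y, z} : Finset _) := by simp
  have hy : y ∈ ({x, y, z} : Finset _) := by simp
  have hz : z ∈ ({x, y, z} : Finset _) := by simp
  have hfxy : x.1 ≠ y.1 := fun h => hxy (hfst hx hy h)
  have hfxz : x.1 ≠ z.1 := fun h => hxz (hfst hx hz h)
  have hfyz : y.1 ≠ z.1 := fun h => hyz (hfst hy hz h)
  have hsxy : y.2 - x.2 ≠ 0 := sub_ne_zero.mpr fun h => hxy (hsnd hx hy h.symm)
  have hsxz : z.2 - x.2 ≠ 0 := sub_ne_zero.mpr fun h => hxz (hsnd hx hz h.symm)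
  have hsyz : y.2 - x.2 ≠ z.2 - x.2 := fun h => hyz (hsnd hy hz (sub_left_inj.mp h))
  rw [← deltaCells_image_sub _ x.2]
  simp only [triangleMasks, List.mem_dedup, List.mem_filterMap]
  refine ⟨(x.1, y.1, z.1, (y.2 - x.2).val, (z.2 - x.2).val), by simp [ZMod.val_lt], ?_⟩
  simp [hfxy, hfxz, hfyz, hsxy, hsxz, (ZMod.val_injective M).ne hsyz]

end Triangles

def targetCells : Finset (Fin 5 × Fin 5 × ZMod 4) :=
  Finset.univ.filter fun c => c.1 ≠ c.2.1 ∧ c.2.2 ≠ 0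

theorem count_nonHoleDiffs_one_four (d : ZMod 4) :
    (nonHoleDiffs 1 4).count d = if d = 0 then 0 else 1 := by
  revert d
  decide

theorem hasExactCover_triangleMasks :
    hasExactCover (triangleMasks 5 4) (List.range 100) (cellMask targetCells) = false := by
  decide +kernel

/-- There is no `3`-SCHGDD of type `(5, 1^4)`. -/
theorem no_schgdd_five_one_four :
    ¬ ∃ B : Multiset (Finset (Fin 5 × ZMod (1 * 4))), IsSCHGDD 3 5 1 4 B := by
  rintro ⟨B, hcard, hpair, hdiag⟩
  have hΔ (i j : Fin 5) (d : ZMod 4) :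
      (blockDelta B i j).count d = if (i, j, d) ∈ targetCells then 1 else 0 := by
    by_cases hij : i = j
    · simp [hij, hdiag, targetCells]
    · simp [hpair i j hij, count_nonHoleDiffs_one_four, targetCells, hij]
  have hfst b (hb : b ∈ B) := injOn_fst_of_blockDelta_self hdiag hb
  have hsnd b (hb : b ∈ B) := injOn_snd_of_zero_notMem_blockDelta (fun i j =>
    Multiset.count_eq_zero.mp (by simpa [targetCells] using hΔ i j 0)) hb
  have hcover := isExactCover_map_cellMask_deltaCells
    (fun b hb => cellMask_deltaCells_mem_triangleMasks (hcard b hb) (hfst b hb) (hsnd b hb)) hfst hΔ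
  have hfound := hasExactCover_of_isExactCover hcover fun k hk =>
    List.mem_range.mpr (lt_of_testBit_cellMask hk)
  simp [hasExactCover_triangleMasks] at hfound
end

section
/- If there exist a k-SCHGDD of type (n, w^t) and a (k, v)-CDM, then there exists a k-SCHGDD of type (n, (wv)^t). -/
/-- A `(k, m)`-cyclic difference matrix: a `k × m` matrix over `Z_m` such that for any two
distinct rows, the list of entrywise differences contains each element of `Z_m` exactly once. -/
def IsCDM (k m : ℕ) (D : Fin k → Fin m → ZMod m) : Prop :=
  ∀ x y : Fin k, x ≠ y →
    ((Finset.univ.val : Multiset (Fin m)).map (fun j => D x j - D y j))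
      = (Multiset.range m).map (fun z => (z : ZMod m))


/-!
Reduction `ℤ/wvt → ℤ/wt` is onto, with kernel `wt · ℤ/v`. Label the `k` points of each base
block by the rows of the CDM `D` and, for each column `c`, lift the point `(i, x)` with label `r`
to `(i, x + wt · D r c)`. For two points of a block with difference `d` and labels `r ≠ s`, the
`v` lifted differences are `d + wt · (D r c - D s c)`, which by the CDM property run exactly once
through the fibre over `d`. So `Δ_{ij}` of the lifted family is the union of the fibres over
`Δ_{ij}` of the old one, and the fibres over `ℤ/wt ∖ S` make up `ℤ/wvt ∖ S'`, since `z` is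
a multiple of `t` exactly when its reduction mod `wt` is.
-/

open Finset

theorem Multiset.bind_filter_eq_filter_mem {α β : Type*} [DecidableEq β] {s : Multiset β}
    (hs : s.Nodup) (u : Multiset α) (f : α → β) :
    s.bind (fun d => u.filter (f · = d)) = u.filter (f · ∈ s) := by
  induction s using Multiset.induction_on with
  | empty => simp
  | cons d s ih =>
    obtain ⟨hd, hs⟩ := Multiset.nodup_cons.mp hs
    have hdisj : u.filter (fun a => f a = d ∧ f a ∈ s) = 0 :=
      Multiset.filter_eq_nil.mpr (by rintro a - ⟨rfl, h⟩; exact hd h)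
    rw [Multiset.cons_bind, ih hs, Multiset.filter_add_filter, hdisj, add_zero]
    simp only [Multiset.mem_cons]

theorem Multiset.exists_map_eq_of_forall_mem {α β : Type*} {f : α → β} {s : Multiset β}
    (hs : ∀ b ∈ s, ∃ a, f a = b) : ∃ l : Multiset α, l.map f = s := by
  induction s using Multiset.induction_on with
  | empty => exact ⟨0, rfl⟩
  | cons b s ih =>
    obtain ⟨a, rfl⟩ := hs b (Multiset.mem_cons_self b s)
    obtain ⟨l, rfl⟩ := ih fun c hc => hs c (Multiset.mem_cons_of_mem hc)
    exact ⟨a ::ₘ l, Multiset.map_cons f a l⟩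

theorem Finset.exists_univ_map_eq_of_card_eq {α : Type*} {s : Finset α} {k : ℕ}
    (hs : s.card = k) : ∃ β : Fin k ↪ α, univ.map β = s := by
  subst hs
  refine ⟨s.equivFin.symm.toEmbedding.trans (Function.Embedding.subtype _), ?_⟩
  rw [← Finset.map_map, Finset.univ_map_equiv_to_embedding, Finset.univ_eq_attach,
    Finset.attach_map_val]

/-- Written as in `IsCDM` and `nonHoleDiffs`, where the coercion elaborates as a monadic lift
of the multiset `range m`, not as `map Nat.cast`. -/
theorem ZMod.range_map_natCast (m : ℕ) [NeZero m] :
    (Multiset.range m).map (fun z => (z : ZMod m)) = (univ : Finset (ZMod m)).val := by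
  simp only [Multiset.pure_def, Multiset.bind_def, Multiset.bind_singleton, Multiset.map_id']
  refine (Multiset.Nodup.ext ?_ univ.nodup).mpr fun z => ?_
  · refine (Multiset.nodup_range m).map_on fun a ha b hb hab => ?_
    rw [Multiset.mem_range] at ha hb
    simpa [ZMod.val_cast_of_lt ha, ZMod.val_cast_of_lt hb] using congrArg ZMod.val hab
  · simpa using ⟨z.val, ZMod.val_lt z, ZMod.natCast_zmod_val z⟩

section
variable {M v N : ℕ}

theorem ZMod.exists_natCast_mul_eq_of_cast_eq_zero [NeZero N] (hMN : M ∣ N) {z : ZMod N}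
    (hz : (cast z : ZMod M) = 0) : ∃ e : ℕ, ((M * e : ℕ) : ZMod N) = z := by
  rw [← ZMod.natCast_zmod_val z, ZMod.cast_natCast hMN, ZMod.natCast_eq_zero_iff] at hz
  obtain ⟨e, he⟩ := hz
  exact ⟨e, by rw [← he, ZMod.natCast_zmod_val]⟩

/-- `e ↦ M e`, well defined on `ℤ/v` because `M v = N`. -/
def scaleHom (h : M * v = N) : ZMod v →+ ZMod N :=
  ZMod.lift v ⟨zmultiplesHom _ (M : ZMod N), by
    simp [← Nat.cast_mul, mul_comm, h]⟩

theorem scaleHom_natCast (h : M * v = N) (e : ℕ) : scaleHom h e = ((M * e : ℕ) : ZMod N) := by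
  rw [← Int.cast_natCast, scaleHom, ZMod.lift_coe]
  simp [mul_comm]

theorem cast_scaleHom (h : M * v = N) (e : ZMod v) : (ZMod.cast (scaleHom h e) : ZMod M) = 0 := by
  obtain ⟨e, rfl⟩ := ZMod.intCast_surjective e
  have hMN : M ∣ N := ⟨v, h.symm⟩
  simp only [scaleHom, ZMod.lift_coe, zmultiplesHom_apply, zsmul_eq_mul]
  rw [ZMod.cast_mul hMN, ZMod.cast_natCast hMN, ZMod.natCast_self, mul_zero]

theorem scaleHom_injective (h : M * v = N) (hM : M ≠ 0) : Function.Injective (scaleHom h) := by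
  refine (ZMod.lift_injective v).mpr fun e he => ?_
  rw [zmultiplesHom_apply, zsmul_eq_mul, ← Int.cast_natCast, ← Int.cast_mul,
    ZMod.intCast_zmod_eq_zero_iff_dvd, ← h, Nat.cast_mul, mul_comm e] at he
  exact (ZMod.intCast_zmod_eq_zero_iff_dvd e v).mpr
    (Int.dvd_of_mul_dvd_mul_left (by exact_mod_cast hM) he)

def castFiber (M : ℕ) [NeZero N] (d : ZMod M) : Multiset (ZMod N) :=
  (univ : Finset (ZMod N)).val.filter (fun z => (ZMod.cast z : ZMod M) = d)

theorem univ_map_add_scaleHom [NeZero v] [NeZero N] (h : M * v = N) (c : ZMod N) :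
    (univ : Finset (ZMod v)).val.map (fun e => c + scaleHom h e)
      = castFiber M (ZMod.cast c : ZMod M) := by
  have hMN : M ∣ N := ⟨v, h.symm⟩
  have hM : M ≠ 0 := left_ne_zero_of_mul (h ▸ NeZero.ne N)
  refine (Multiset.Nodup.ext ?_ (univ.nodup.filter _)).mpr fun z => ?_
  · exact univ.nodup.map ((add_right_injective c).comp (scaleHom_injective h hM))
  · simp only [Multiset.mem_map, Multiset.mem_filter, Finset.mem_val,
      Finset.mem_univ, true_and]
    constructor
    · rintro ⟨e, rfl⟩
      rw [ZMod.cast_add hMN, cast_scaleHom, add_zero]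
    · intro hz
      obtain ⟨e, he⟩ := ZMod.exists_natCast_mul_eq_of_cast_eq_zero hMN
        (z := z - c) (by rw [ZMod.cast_sub hMN, hz, sub_self])
      exact ⟨e, by rw [scaleHom_natCast, he, add_sub_cancel]⟩

end

theorem mem_holeMultiples_iff {m t : ℕ} (hm : m ≠ 0) {z : ZMod (m * t)} :
    z ∈ holeMultiples m t ↔ ∃ c : ℕ, ((c * t : ℕ) : ZMod (m * t)) = z := by
  simp only [holeMultiples, Multiset.mem_map, Multiset.mem_range]
  constructor
  · rintro ⟨c, -, hc⟩
    exact ⟨c, hc⟩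
  · rintro ⟨c, rfl⟩
    refine ⟨c % m, Nat.mod_lt c (Nat.pos_of_ne_zero hm), ?_⟩
    rw [← Nat.mul_mod_mul_right, ZMod.natCast_mod]

theorem nonHoleDiffs_eq_filter (m t : ℕ) [NeZero (m * t)] :
    nonHoleDiffs m t = (univ : Finset (ZMod (m * t))).val.filter (· ∉ holeMultiples m t) := by
  rw [nonHoleDiffs, ZMod.range_map_natCast]

theorem cast_mem_holeMultiples_iff {w v t : ℕ} [NeZero (w * v * t)] (z : ZMod (w * v * t)) :
    (ZMod.cast z : ZMod (w * t)) ∈ holeMultiples w t ↔ z ∈ holeMultiples (w * v) t := by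
  have hdvd : w * t ∣ w * v * t := ⟨v, by ring⟩
  have hwv : w * v ≠ 0 := left_ne_zero_of_mul (NeZero.ne (w * v * t))
  rw [mem_holeMultiples_iff hwv, mem_holeMultiples_iff (left_ne_zero_of_mul hwv)]
  constructor
  · rintro ⟨c, hc⟩
    obtain ⟨e, he⟩ := ZMod.exists_natCast_mul_eq_of_cast_eq_zero hdvd
      (z := z - ((c * t : ℕ) : ZMod (w * v * t)))
      (by rw [ZMod.cast_sub hdvd, ZMod.cast_natCast hdvd, hc, sub_self])
    refine ⟨c + w * e, ?_⟩
    rw [eq_sub_iff_add_eq] at he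
    rw [← he]
    push_cast
    ring
  · rintro ⟨c, rfl⟩
    exact ⟨c, (ZMod.cast_natCast hdvd _).symm⟩

theorem bind_castFiber_nonHoleDiffs (w v t : ℕ) [NeZero (w * t)] [NeZero (w * v * t)] :
    (nonHoleDiffs w t).bind (castFiber (w * t)) = nonHoleDiffs (w * v) t := by
  have hnodup : (nonHoleDiffs w t).Nodup := by
    rw [nonHoleDiffs_eq_filter]
    exact univ.nodup.filter _
  unfold castFiber
  rw [Multiset.bind_filter_eq_filter_mem hnodup, nonHoleDiffs_eq_filter (w * v) t]
  refine Multiset.filter_congr fun z _ => ?_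
  rw [← cast_mem_holeMultiples_iff, nonHoleDiffs_eq_filter]
  simp

section
variable {n M : ℕ}

theorem blockDelta_bind {ι : Type*} (s : Multiset ι)
    (F : ι → Multiset (Finset (Fin n × ZMod M))) (i j : Fin n) :
    blockDelta (s.bind F) i j = s.bind fun x => blockDelta (F x) i j := by
  simp only [blockDelta, Multiset.bind_assoc]

theorem blockDelta_map {ι : Type*} (s : Multiset ι) (F : ι → Finset (Fin n × ZMod M))
    (i j : Fin n) : blockDelta (s.map F) i j = s.bind fun x => blockDelta {F x} i j := by
  simp only [blockDelta, Multiset.bind_map, Multiset.singleton_bind]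

def labelPairs {k : ℕ} (a : Fin k → Fin n) (i j : Fin n) : Finset (Fin k × Fin k) :=
  univ.filter fun rs => a rs.1 = i ∧ a rs.2 = j ∧ rs.1 ≠ rs.2

theorem blockDelta_univ_map {k : ℕ} (β : Fin k ↪ Fin n × ZMod M) (i j : Fin n) :
    blockDelta {univ.map β} i j
      = (labelPairs (fun r => (β r).1) i j).val.map (fun rs => (β rs.1).2 - (β rs.2).2) := by
  have hprod : (univ.map β).val ×ˢ (univ.map β).val = (univ : Finset (Fin k × Fin k)).val.map
      (fun rs => (β rs.1, β rs.2)) := by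
    rw [← Finset.product_val, ← Finset.prodMap_map_product, Finset.univ_product_univ,
      Finset.map_val]
    rfl
  rw [blockDelta, Multiset.singleton_bind, hprod, Multiset.filter_map, Multiset.map_map,
    labelPairs, Finset.filter_val]
  congr 1
  refine Multiset.filter_congr fun rs _ => ?_
  simp only [Function.comp_apply, ne_eq, β.injective.eq_iff]

end

theorem IsCDM.map_sub {k m : ℕ} [NeZero m] {α : Type*} {D : Fin k → Fin m → ZMod m}
    (hD : IsCDM k m D) {x y : Fin k} (hxy : x ≠ y) (g : ZMod m → α) :
    (univ : Finset (Fin m)).val.map (fun j => g (D x j - D y j))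
      = (univ : Finset (ZMod m)).val.map g := by
  have := congrArg (Multiset.map g) (hD x y hxy)
  rwa [Multiset.map_map, ZMod.range_map_natCast] at this

section
variable {n k M v N : ℕ}

def liftPoint (h : M * v = N) (p : Fin n × ZMod M) (e : ZMod v) : Fin n × ZMod N :=
  (p.1, (p.2.val : ZMod N) + scaleHom h e)

theorem cast_liftPoint_snd [NeZero M] (h : M * v = N) (p : Fin n × ZMod M) (e : ZMod v) :
    (ZMod.cast (liftPoint h p e).2 : ZMod M) = p.2 := by
  have hMN : M ∣ N := ⟨v, h.symm⟩
  rw [liftPoint, ZMod.cast_add hMN, cast_scaleHom, add_zero, ZMod.cast_natCast hMN,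
    ZMod.natCast_zmod_val]

def liftEmbedding [NeZero M] (h : M * v = N) (D : Fin k → Fin v → ZMod v)
    (β : Fin k ↪ Fin n × ZMod M) (col : Fin v) : Fin k ↪ Fin n × ZMod N where
  toFun r := liftPoint h (β r) (D r col)
  inj' r s hrs := β.injective <| Prod.ext (congrArg Prod.fst hrs :) <| by
    simpa only [cast_liftPoint_snd] using congrArg (fun p => (ZMod.cast p.2 : ZMod M)) hrs

theorem fst_liftEmbedding [NeZero M] (h : M * v = N) (D : Fin k → Fin v → ZMod v)
    (β : Fin k ↪ Fin n × ZMod M) (col : Fin v) :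
    (fun r => (liftEmbedding h D β col r).1) = fun r => (β r).1 :=
  rfl

theorem bind_blockDelta_liftEmbedding [NeZero M] [NeZero v] [NeZero N] (h : M * v = N)
    {D : Fin k → Fin v → ZMod v} (hD : IsCDM k v D) (β : Fin k ↪ Fin n × ZMod M)
    (i j : Fin n) :
    (univ : Finset (Fin v)).val.bind
        (fun col => blockDelta {univ.map (liftEmbedding h D β col)} i j)
      = (blockDelta {univ.map β} i j).bind (castFiber M) := by
  have hMN : M ∣ N := ⟨v, h.symm⟩
  simp only [blockDelta_univ_map, fst_liftEmbedding]
  rw [Multiset.bind_map_comm, Multiset.bind_map]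
  refine Multiset.bind_congr fun rs hrs => ?_
  have hne : rs.1 ≠ rs.2 := (Finset.mem_filter.mp hrs).2.2.2
  set c : ZMod N := ((β rs.1).2.val : ZMod N) - ((β rs.2).2.val : ZMod N)
  have hc : (ZMod.cast c : ZMod M) = (β rs.1).2 - (β rs.2).2 := by
    rw [ZMod.cast_sub hMN, ZMod.cast_natCast hMN, ZMod.cast_natCast hMN, ZMod.natCast_zmod_val,
      ZMod.natCast_zmod_val]
  calc (univ : Finset (Fin v)).val.map
        (fun col => (liftEmbedding h D β col rs.1).2 - (liftEmbedding h D β col rs.2).2)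
      = (univ : Finset (Fin v)).val.map (fun col => c + scaleHom h (D rs.1 col - D rs.2 col)) := by
        refine Multiset.map_congr rfl fun col _ => ?_
        simp only [liftEmbedding, liftPoint, Function.Embedding.coeFn_mk, map_sub, c]
        ring
    _ = (univ : Finset (ZMod v)).val.map (fun e => c + scaleHom h e) :=
        hD.map_sub hne fun e => c + scaleHom h e
    _ = castFiber M ((β rs.1).2 - (β rs.2).2) := by rw [univ_map_add_scaleHom, hc]

def liftDesign [NeZero M] (h : M * v = N) (D : Fin k → Fin v → ZMod v)
    (L : Multiset (Fin k ↪ Fin n × ZMod M)) : Multiset (Finset (Fin n × ZMod N)) :=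
  L.bind fun β => (univ : Finset (Fin v)).val.map fun col => univ.map (liftEmbedding h D β col)

theorem card_of_mem_liftDesign [NeZero M] (h : M * v = N) (D : Fin k → Fin v → ZMod v)
    {L : Multiset (Fin k ↪ Fin n × ZMod M)} {b : Finset (Fin n × ZMod N)}
    (hb : b ∈ liftDesign h D L) : b.card = k := by
  obtain ⟨β, -, hb⟩ := Multiset.mem_bind.mp hb
  obtain ⟨col, -, rfl⟩ := Multiset.mem_map.mp hb
  rw [Finset.card_map, Finset.card_univ, Fintype.card_fin]

theorem blockDelta_liftDesign [NeZero M] [NeZero v] [NeZero N] (h : M * v = N)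
    {D : Fin k → Fin v → ZMod v} (hD : IsCDM k v D) (L : Multiset (Fin k ↪ Fin n × ZMod M))
    (i j : Fin n) :
    blockDelta (liftDesign h D L) i j
      = (blockDelta (L.map fun β => univ.map β) i j).bind (castFiber M) := by
  rw [liftDesign, blockDelta_bind, blockDelta_map, Multiset.bind_assoc]
  refine Multiset.bind_congr fun β _ => ?_
  rw [blockDelta_map, bind_blockDelta_liftEmbedding h hD]

end

theorem isSCHGDD_zero_of_mul_eq_zero {k n m t : ℕ} (hmt : m * t = 0) : IsSCHGDD k n m t 0 := by
  have hrange : Multiset.range (m * t) = 0 := by rw [hmt, Multiset.range_zero]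
  refine ⟨by simp, fun i j _ => ?_, fun i => rfl⟩
  rw [nonHoleDiffs, hrange]
  rfl

/-- If there exist a `k`-SCHGDD of type `(n, w^t)` and a `(k, v)`-CDM, then there exists a
`k`-SCHGDD of type `(n, (wv)^t)`. -/
theorem schgdd_mul_cdm (k n w t v : ℕ)
    (h1 : ∃ B : Multiset (Finset (Fin n × ZMod (w * t))), IsSCHGDD k n w t B)
    (h2 : ∃ D : Fin k → Fin v → ZMod v, IsCDM k v D) :
    ∃ B' : Multiset (Finset (Fin n × ZMod (w * v * t))), IsSCHGDD k n (w * v) t B' := by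
  obtain ⟨B, hcard, hoff, hdiag⟩ := h1
  obtain ⟨D, hD⟩ := h2
  rcases eq_or_ne (w * v * t) 0 with h0 | h0
  · exact ⟨0, isSCHGDD_zero_of_mul_eq_zero h0⟩
  have : NeZero (w * v * t) := ⟨h0⟩
  have : NeZero (w * t) := ⟨by contrapose! h0; rw [mul_right_comm, h0, zero_mul]⟩
  have : NeZero v := ⟨right_ne_zero_of_mul (left_ne_zero_of_mul h0)⟩
  obtain ⟨L, rfl⟩ := Multiset.exists_map_eq_of_forall_mem fun b hb =>
    Finset.exists_univ_map_eq_of_card_eq (hcard b hb)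
  have h : w * t * v = w * v * t := by ring
  refine ⟨liftDesign h D L, fun b hb => card_of_mem_liftDesign h D hb, fun i j hij => ?_,
    fun i => ?_⟩
  · rw [blockDelta_liftDesign h hD, hoff i j hij, bind_castFiber_nonHoleDiffs]
  · rw [blockDelta_liftDesign h hD, hdiag i, Multiset.zero_bind]
end

section
/- Let n ≡ 3 or 7 (mod 12). There is no 3-SCHGDD of type (n, m^t) for any positive integers m ≡ 1 (mod 2) and t ≡ 2 (mod 4). -/
/-!
Reduce all differences modulo 2, which makes sense because `mt` is even. The three points of a
block split by parity as 3 + 0 or 2 + 1, so each block has 0 or 4 ordered pairs of points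
whose difference is odd, and the number of odd differences summed over all `Δ_ij` is divisible
by 4. On the other hand `Δ_ii = ∅`, and each of the `n(n−1)` multisets `Δ_ij` with `i ≠ j` is
`Z_mt \ S`. Since `t` is even, `S` has only even residues, so `Z_mt \ S` contains all `mt/2`
odd residues. The total is therefore `n(n−1)·mt/2`, which is `2 (mod 4)` when `n ≡ 3 (mod 4)`,
`m` is odd and `t ≡ 2 (mod 4)`.
-/

open Finset

namespace Multiset

theorem countP_bind {α β : Type*} (s : Multiset α) (f : α → Multiset β) (p : β → Prop)
    [DecidablePred p] : (s.bind f).countP p = (s.map fun a => (f a).countP p).sum := by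
  simp [countP_eq_card_filter, filter_bind, card_bind]

theorem sum_countP_fiber {α β : Type*} [Fintype β] [DecidableEq β] (f : α → β) (p : α → Prop)
    [DecidablePred p] (s : Multiset α) :
    ∑ y, s.countP (fun a => f a = y ∧ p a) = s.countP p := by
  induction s using Multiset.induction with
  | empty => simp
  | cons a s ih => by_cases hp : p a <;> simp [countP_cons, sum_add_distrib, ih, hp]

theorem four_dvd_countP_product_ne {α : Type*} (f : α → ZMod 2) (s : Multiset α)
    (hs : card s = 3) : 4 ∣ (s ×ˢ s).countP fun p => f p.1 ≠ f p.2 := by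
  obtain ⟨u, v, w, rfl⟩ := card_eq_three.mp hs
  simp only [insert_eq_cons, ← cons_zero, cons_product, zero_product, countP_add, countP_cons,
    countP_zero, map_cons, map_zero]
  generalize f u = x, f v = y, f w = z
  revert x y z
  decide

theorem countP_odd_range (M : ℕ) : (range M).countP Odd = M / 2 := by
  induction M with
  | zero => simp
  | succ M ih =>
    rw [range_succ, countP_cons, ih]
    split_ifs with h <;> rw [Nat.odd_iff] at h <;> omega

end Multiset

section blockDelta

variable {n M : ℕ}

theorem sum_countP_blockDelta (B : Multiset (Finset (Fin n × ZMod M))) (q : ZMod M → Prop)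
    [DecidablePred q] :
    ∑ ij : Fin n × Fin n, (blockDelta B ij.1 ij.2).countP q =
      (B.map fun b => (b.val ×ˢ b.val).countP fun p => p.1 ≠ p.2 ∧ q (p.1.2 - p.2.2)).sum := by
  simp only [blockDelta, Multiset.countP_bind, ← Multiset.sum_map_sum]
  congr 1
  refine Multiset.map_congr rfl fun b _ => ?_
  rw [← Multiset.sum_countP_fiber (fun p => (p.1.1, p.2.1))]
  refine Finset.sum_congr rfl fun ij _ => ?_
  rw [Multiset.countP_map, ← Multiset.countP_eq_card_filter, Multiset.countP_filter]
  refine Multiset.countP_congr rfl fun p _ => ?_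
  rw [Prod.ext_iff, eq_iff_iff]
  tauto

theorem four_dvd_sum_countP_blockDelta {F : Type*} [FunLike F (ZMod M) (ZMod 2)]
    [AddMonoidHomClass F (ZMod M) (ZMod 2)] (φ : F) (B : Multiset (Finset (Fin n × ZMod M)))
    (hB : ∀ b ∈ B, b.card = 3) :
    4 ∣ ∑ ij : Fin n × Fin n, (blockDelta B ij.1 ij.2).countP fun z => φ z = 1 := by
  rw [sum_countP_blockDelta]
  refine Multiset.dvd_sum fun _ hc => ?_
  obtain ⟨b, hb, rfl⟩ := Multiset.mem_map.mp hc
  have sub_eq_one_iff_ne : ∀ x y : ZMod 2, x - y = 1 ↔ x ≠ y := by decide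
  refine (Multiset.four_dvd_countP_product_ne (fun x => φ x.2) b.val (hB b hb)).trans
    (dvd_of_eq (Multiset.countP_congr rfl fun p _ => ?_))
  rw [map_sub, sub_eq_one_iff_ne, eq_iff_iff]
  exact (and_iff_right_of_imp fun hφ hp => hφ (by rw [hp])).symm

end blockDelta

theorem IsSCHGDD.sum_countP_blockDelta {k n m t : ℕ}
    {B : Multiset (Finset (Fin n × ZMod (m * t)))} (hB : IsSCHGDD k n m t B)
    (q : ZMod (m * t) → Prop) [DecidablePred q] :
    ∑ ij : Fin n × Fin n, (blockDelta B ij.1 ij.2).countP q =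
      n * (n - 1) * (nonHoleDiffs m t).countP q := by
  obtain ⟨-, hoff, hdiag⟩ := hB
  have hrow : ∀ i, ∑ j, (blockDelta B i j).countP q = (n - 1) * (nonHoleDiffs m t).countP q := by
    intro i
    rw [← add_sum_erase _ _ (mem_univ i), hdiag, Multiset.countP_zero, zero_add,
      sum_congr rfl fun j hj => by rw [hoff i j (ne_of_mem_erase hj).symm], sum_const,
      card_erase_of_mem (mem_univ i), card_univ, Fintype.card_fin, smul_eq_mul]
  rw [Fintype.sum_prod_type, sum_congr rfl fun i _ => hrow i, sum_const, card_univ,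
    Fintype.card_fin, smul_eq_mul, mul_assoc]

theorem countP_odd_nonHoleDiffs {m t : ℕ} (ht : 2 ∣ t) (φ : ZMod (m * t) →+* ZMod 2) :
    (nonHoleDiffs m t).countP (fun z => φ z = 1) = m * t / 2 := by
  have hole_even : ∀ z ∈ holeMultiples m t, φ z = 0 := by
    simp only [holeMultiples, Multiset.mem_map, forall_exists_index, and_imp]
    rintro _ c - rfl
    rw [map_natCast, ZMod.natCast_eq_zero_iff_even]
    exact (even_iff_two_dvd.mpr ht).mul_left c
  -- the `map` in `nonHoleDiffs` elaborates as a bind in the `Multiset` monad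
  simp only [nonHoleDiffs, Multiset.map_id', Multiset.bind_def, Multiset.pure_def,
    Multiset.bind_singleton]
  rw [Multiset.countP_filter, Multiset.countP_map, ← Multiset.countP_odd_range,
    ← Multiset.countP_eq_card_filter]
  refine Multiset.countP_congr rfl fun z _ => ?_
  rw [map_natCast, ZMod.natCast_eq_one_iff_odd, eq_iff_iff]
  refine and_iff_left_of_imp fun hz hole => ?_
  have := hole_even _ hole
  rw [map_natCast, ZMod.natCast_eq_zero_iff_even] at this
  exact Nat.not_even_iff_odd.mpr hz this

theorem not_four_dvd_mul_sub_one_mul_half {n m t : ℕ} (hn : n % 4 = 3) (hm : m % 2 = 1)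
    (ht : t % 4 = 2) : ¬ 4 ∣ n * (n - 1) * (m * t / 2) := by
  obtain ⟨a, rfl⟩ : ∃ a, n = 4 * a + 3 := ⟨n / 4, by omega⟩
  obtain ⟨b, rfl⟩ : ∃ b, m = 2 * b + 1 := ⟨m / 2, by omega⟩
  obtain ⟨c, rfl⟩ : ∃ c, t = 4 * c + 2 := ⟨t / 4, by omega⟩
  obtain ⟨k, hk⟩ : Odd ((4 * a + 3) * (2 * a + 1) * ((2 * b + 1) * (2 * c + 1))) :=
    (Odd.mul ⟨2 * a + 1, by ring⟩ ⟨a, rfl⟩).mul (Odd.mul ⟨b, rfl⟩ ⟨c, rfl⟩)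
  have hprod : (4 * a + 3) * (4 * a + 3 - 1) * ((2 * b + 1) * (4 * c + 2) / 2) =
      2 * ((4 * a + 3) * (2 * a + 1) * ((2 * b + 1) * (2 * c + 1))) := by
    rw [show 4 * a + 3 - 1 = 2 * (2 * a + 1) by omega,
      show (2 * b + 1) * (4 * c + 2) = 2 * ((2 * b + 1) * (2 * c + 1)) by ring,
      Nat.mul_div_cancel_left _ two_pos]
    ring
  omega

/-- Let `n ≡ 3, 7 (mod 12)`. There is no `3`-SCHGDD of type `(n, m^t)` for any positive
integers `m ≡ 1 (mod 2)` and `t ≡ 2 (mod 4)`. -/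
theorem no_schgdd_n_three_seven_mod_twelve (n m t : ℕ)
    (hn : n % 12 = 3 ∨ n % 12 = 7) (hm : m % 2 = 1) (ht : t % 4 = 2) :
    ¬ ∃ B : Multiset (Finset (Fin n × ZMod (m * t))), IsSCHGDD 3 n m t B := by
  rintro ⟨B, hB⟩
  have ht2 : 2 ∣ t := by omega
  let φ := ZMod.castHom (dvd_mul_of_dvd_right ht2 m) (ZMod 2)
  have h4 := four_dvd_sum_countP_blockDelta φ B hB.1
  rw [hB.sum_countP_blockDelta, countP_odd_nonHoleDiffs ht2] at h4
  exact not_four_dvd_mul_sub_one_mul_half (by omega) hm ht h4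
end

section
/- Suppose there is a 2-D (n×m, k, λ)-OOC with b codewords, and m = m₁m₂. Then there is a 2-D (nm₁ × m₂, k, λ)-OOC with m₁b codewords. -/
/-!
Every residue mod `m₁ m₂` is uniquely `q + m₁ s` with `0 ≤ q < m₁` and `s ∈ ℤ/m₂`; this
identifies `I_n × Z_{m₁m₂}` with `I_{nm₁} × Z_{m₂}` so that the shift by `m₁ s` becomes the
shift by `s`. The new code consists of the images of the translates `B + i`, `i < m₁`, of the
codewords `B`. The correlation of the images of `B + i` and `B' + j` at shift `s` is
`|B ∩ (B' + d)|` with `d = (j + m₁ s) - i`, and by uniqueness of the decomposition `d = 0`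
only when `i = j` and `s = 0`; so every correlation of the new code is an auto-correlation at a
nonzero shift or a cross-correlation of the old one.
-/

def oocShift {n m : ℕ} (r : ZMod m) (B : Finset (Fin n × ZMod m)) :
    Finset (Fin n × ZMod m) :=
  B.image (fun p => (p.1, p.2 + r))

/-- A two-dimensional `(n × m, k, λ)` optical orthogonal code, in set-theoretic form: a
family `C` of `k`-subsets of `I_n × Z_m` such that `|B ∩ (B + r)| ≤ λ` for every
codeword `B` and `r ≠ 0` (auto-correlation), and `|B ∩ (B' + r)| ≤ λ` for distinct
codewords `B, B'` and every `r` (cross-correlation). -/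
def IsOOC (n m k lam : ℕ) (C : Multiset (Finset (Fin n × ZMod m))) : Prop :=
  (∀ B ∈ C, B.card = k) ∧
  (∀ B ∈ C, ∀ r : ZMod m, r ≠ 0 → (B ∩ oocShift r B).card ≤ lam) ∧
  (∀ B ∈ C, ∀ B' ∈ C.erase B, ∀ r : ZMod m, (B ∩ oocShift r B').card ≤ lam)

open Finset

section Shift

variable {n m : ℕ}

theorem prodMap_add_right_injective (r : ZMod m) :
    Function.Injective (Prod.map id (· + r) : Fin n × ZMod m → Fin n × ZMod m) :=
  Function.injective_id.prodMap (add_left_injective r)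

theorem card_oocShift (r : ZMod m) (B : Finset (Fin n × ZMod m)) :
    (oocShift r B).card = B.card :=
  card_image_of_injective B (prodMap_add_right_injective r)

theorem oocShift_inter (r : ZMod m) (X Y : Finset (Fin n × ZMod m)) :
    oocShift r (X ∩ Y) = oocShift r X ∩ oocShift r Y :=
  image_inter X Y (prodMap_add_right_injective r)

theorem oocShift_oocShift (a b : ZMod m) (B : Finset (Fin n × ZMod m)) :
    oocShift a (oocShift b B) = oocShift (b + a) B := by
  simp only [oocShift, image_image, Function.comp_def, add_assoc]

theorem card_oocShift_inter_oocShift (a b : ZMod m) (X Y : Finset (Fin n × ZMod m)) :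
    (oocShift a X ∩ oocShift b Y).card = (X ∩ oocShift (b - a) Y).card := by
  rw [← card_oocShift a (X ∩ oocShift (b - a) Y), oocShift_inter, oocShift_oocShift,
    sub_add_cancel]

end Shift

section Decomposition

variable (m₁ m₂ : ℕ)

/-- `s ↦ m₁ s`, well defined because `m₁ m₂ = 0` in `ZMod (m₁ * m₂)`. -/
def zmodScale : ZMod m₂ →+ ZMod (m₁ * m₂) :=
  ZMod.lift m₂ ⟨zmultiplesHom _ (m₁ : ZMod (m₁ * m₂)), by
    simp [zsmul_eq_mul, mul_comm (m₂ : ZMod (m₁ * m₂)), ← Nat.cast_mul]⟩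

variable {m₁ m₂}

theorem zmodScale_intCast (z : ℤ) :
    zmodScale m₁ m₂ z = ((z * m₁ : ℤ) : ZMod (m₁ * m₂)) := by
  simp [zmodScale, ZMod.lift_coe, zsmul_eq_mul]

theorem zmodScale_injective (h : m₁ ≠ 0) : Function.Injective (zmodScale m₁ m₂) := by
  rw [injective_iff_map_eq_zero]
  intro s hs
  obtain ⟨z, rfl⟩ := ZMod.intCast_surjective s
  rw [zmodScale_intCast, ZMod.intCast_zmod_eq_zero_iff_dvd, Nat.cast_mul, mul_comm (m₁ : ℤ),
    mul_dvd_mul_iff_right (by exact_mod_cast h)] at hs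
  exact (ZMod.intCast_zmod_eq_zero_iff_dvd z m₂).mpr hs

theorem castHom_zmodScale (s : ZMod m₂) :
    ZMod.castHom (dvd_mul_right m₁ m₂) (ZMod m₁) (zmodScale m₁ m₂ s) = 0 := by
  obtain ⟨z, rfl⟩ := ZMod.intCast_surjective s
  simp [zmodScale_intCast]

variable (m₁ m₂)

def zmodDecomp (x : Fin m₁ × ZMod m₂) : ZMod (m₁ * m₂) :=
  (x.1 : ℕ) + zmodScale m₁ m₂ x.2

variable {m₁ m₂}

theorem zmodDecomp_add_zmodScale (x : Fin m₁ × ZMod m₂) (s : ZMod m₂) :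
    zmodDecomp m₁ m₂ (x.1, x.2 + s) = zmodDecomp m₁ m₂ x + zmodScale m₁ m₂ s := by
  simp only [zmodDecomp, map_add, add_assoc]

theorem zmodDecomp_injective (h : m₁ ≠ 0) : Function.Injective (zmodDecomp m₁ m₂) := by
  have : NeZero m₁ := ⟨h⟩
  rintro ⟨q, s⟩ ⟨q', s'⟩ hqs
  have hq : q = q' := by
    have hcast := congrArg (ZMod.castHom (dvd_mul_right m₁ m₂) (ZMod m₁)) hqs
    simp only [zmodDecomp, map_add, castHom_zmodScale, add_zero, map_natCast] at hcast
    have hval := congrArg ZMod.val hcast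
    rw [ZMod.val_cast_of_lt q.2, ZMod.val_cast_of_lt q'.2] at hval
    exact Fin.ext hval
  subst hq
  exact Prod.ext rfl (zmodScale_injective h (add_left_cancel hqs))

theorem zmodDecomp_surjective (h : m₁ ≠ 0) : Function.Surjective (zmodDecomp m₁ m₂) := by
  intro t
  obtain ⟨z, rfl⟩ := ZMod.intCast_surjective t
  have hm₁ : (0 : ℤ) < m₁ := by exact_mod_cast Nat.pos_of_ne_zero h
  have hmod_nonneg : 0 ≤ z % m₁ := Int.emod_nonneg z hm₁.ne'
  refine ⟨(⟨(z % m₁).toNat, by have := Int.emod_lt_of_pos z hm₁; omega⟩, (z / m₁ : ℤ)), ?_⟩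
  rw [zmodDecomp, zmodScale_intCast, ← Int.cast_natCast, Int.toNat_of_nonneg hmod_nonneg,
    ← Int.cast_add, Int.emod_add_ediv_mul]

noncomputable def zmodDecompEquiv (h : m₁ ≠ 0) : Fin m₁ × ZMod m₂ ≃ ZMod (m₁ * m₂) :=
  Equiv.ofBijective _ ⟨zmodDecomp_injective h, zmodDecomp_surjective h⟩

theorem zmodDecompEquiv_symm_add_zmodScale (h : m₁ ≠ 0) (t : ZMod (m₁ * m₂)) (s : ZMod m₂) :
    (zmodDecompEquiv h).symm (t + zmodScale m₁ m₂ s) =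
      (((zmodDecompEquiv h).symm t).1, ((zmodDecompEquiv h).symm t).2 + s) := by
  rw [Equiv.symm_apply_eq]
  change _ = zmodDecomp m₁ m₂ _
  rw [zmodDecomp_add_zmodScale]
  exact congrArg (· + _) ((zmodDecompEquiv h).apply_symm_apply t).symm

end Decomposition

theorem Multiset.mem_erase_product {α β : Type*} [DecidableEq α] [DecidableEq β]
    {s : Multiset α} {t : Multiset β} (ht : t.Nodup) {a b : α × β} (ha : a ∈ s ×ˢ t)
    (hb : b ∈ (s ×ˢ t).erase a) : b.1 ∈ s.erase a.1 ∨ (b.1 = a.1 ∧ b.2 ≠ a.2) := by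
  obtain ⟨ha₁, ha₂⟩ := Multiset.mem_product.mp ha
  rw [← Multiset.cons_erase ha₁, Multiset.cons_product,
    Multiset.erase_add_left_pos _ (Multiset.mem_map_of_mem _ ha₂),
    ← Multiset.map_erase _ (Prod.mk_right_injective a.1), Multiset.mem_add] at hb
  rcases hb with hb | hb
  · obtain ⟨c, hc, rfl⟩ := Multiset.mem_map.mp hb
    exact Or.inr ⟨rfl, ((Multiset.Nodup.mem_erase_iff ht).mp hc).1⟩
  · exact Or.inl (Multiset.mem_product.mp hb).1

section Folding

variable {n m₁ m₂ : ℕ} (h : m₁ ≠ 0)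

/-- `I_n × Z_{m₁m₂} ≃ I_n × Z_{m₁} × Z_{m₂} ≃ I_{nm₁} × Z_{m₂}`, through `zmodDecompEquiv`. -/
noncomputable def foldEquiv : Fin n × ZMod (m₁ * m₂) ≃ Fin (n * m₁) × ZMod m₂ :=
  ((Equiv.refl _).prodCongr (zmodDecompEquiv h).symm).trans
    ((Equiv.prodAssoc _ _ _).symm.trans (finProdFinEquiv.prodCongr (Equiv.refl _)))

theorem foldEquiv_add_zmodScale (p : Fin n × ZMod (m₁ * m₂)) (s : ZMod m₂) :
    foldEquiv h (p.1, p.2 + zmodScale m₁ m₂ s) =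
      ((foldEquiv h p).1, (foldEquiv h p).2 + s) := by
  simp [foldEquiv, zmodDecompEquiv_symm_add_zmodScale]

theorem oocShift_image_foldEquiv (s : ZMod m₂) (B : Finset (Fin n × ZMod (m₁ * m₂))) :
    oocShift s (B.image (foldEquiv h)) =
      (oocShift (zmodScale m₁ m₂ s) B).image (foldEquiv h) := by
  simp only [oocShift, image_image, Function.comp_def, foldEquiv_add_zmodScale]

theorem card_image_foldEquiv_inter_oocShift (s : ZMod m₂)
    (X Y : Finset (Fin n × ZMod (m₁ * m₂))) :
    (X.image (foldEquiv h) ∩ oocShift s (Y.image (foldEquiv h))).card =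
      (X ∩ oocShift (zmodScale m₁ m₂ s) Y).card := by
  rw [oocShift_image_foldEquiv, ← image_inter _ _ (foldEquiv h).injective,
    card_image_of_injective _ (foldEquiv h).injective]

noncomputable def foldTranslate (B : Finset (Fin n × ZMod (m₁ * m₂))) (j : Fin m₁) :
    Finset (Fin (n * m₁) × ZMod m₂) :=
  (oocShift ((j : ℕ) : ZMod (m₁ * m₂)) B).image (foldEquiv h)

theorem card_foldTranslate (B : Finset (Fin n × ZMod (m₁ * m₂))) (j : Fin m₁) :
    (foldTranslate h B j).card = B.card := by
  rw [foldTranslate, card_image_of_injective _ (foldEquiv h).injective, card_oocShift]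

theorem card_foldTranslate_inter_oocShift (B B' : Finset (Fin n × ZMod (m₁ * m₂)))
    (i j : Fin m₁) (s : ZMod m₂) :
    (foldTranslate h B i ∩ oocShift s (foldTranslate h B' j)).card =
      (B ∩ oocShift (zmodDecomp m₁ m₂ (j, s) - zmodDecomp m₁ m₂ (i, 0)) B').card := by
  rw [foldTranslate, foldTranslate, card_image_foldEquiv_inter_oocShift, oocShift_oocShift,
    card_oocShift_inter_oocShift]
  simp [zmodDecomp]

noncomputable def foldedCode (C : Multiset (Finset (Fin n × ZMod (m₁ * m₂)))) :
    Multiset (Finset (Fin (n * m₁) × ZMod m₂)) :=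
  (C ×ˢ (univ : Finset (Fin m₁)).val).map fun x => foldTranslate h x.1 x.2

theorem card_foldedCode (C : Multiset (Finset (Fin n × ZMod (m₁ * m₂)))) :
    Multiset.card (foldedCode h C) = m₁ * Multiset.card C := by
  simp [foldedCode, mul_comm]

theorem IsOOC.foldedCode {k lam : ℕ} {C : Multiset (Finset (Fin n × ZMod (m₁ * m₂)))}
    (hC : IsOOC n (m₁ * m₂) k lam C) : IsOOC (n * m₁) m₂ k lam (foldedCode h C) := by
  obtain ⟨hcard, hauto, hcross⟩ := hC
  have hinj := zmodDecomp_injective (m₂ := m₂) h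
  refine ⟨?_, ?_, ?_⟩
  · simp only [_root_.foldedCode, Multiset.mem_map, Prod.exists, Multiset.mem_product]
    rintro _ ⟨B, j, ⟨hB, -⟩, rfl⟩
    rw [card_foldTranslate, hcard B hB]
  · simp only [_root_.foldedCode, Multiset.mem_map, Prod.exists, Multiset.mem_product]
    rintro _ ⟨B, j, ⟨hB, -⟩, rfl⟩ s hs
    rw [card_foldTranslate_inter_oocShift]
    refine hauto B hB _ (sub_ne_zero.mpr fun heq => hs ?_)
    exact congrArg Prod.snd (hinj heq)
  · intro _ hB₁ _ hB₂ s
    obtain ⟨x, hx, rfl⟩ := Multiset.mem_map.mp hB₁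
    rw [_root_.foldedCode, ← Multiset.map_erase_of_mem _ _ hx] at hB₂
    obtain ⟨y, hy, rfl⟩ := Multiset.mem_map.mp hB₂
    rw [card_foldTranslate_inter_oocShift]
    rcases Multiset.mem_erase_product (univ : Finset (Fin m₁)).nodup hx hy with
      hy₁ | ⟨hy₁, hy₂⟩
    · exact hcross x.1 (Multiset.mem_product.mp hx).1 y.1 hy₁ _
    · rw [hy₁]
      refine hauto x.1 (Multiset.mem_product.mp hx).1 _ (sub_ne_zero.mpr fun heq => hy₂ ?_)
      exact congrArg Prod.fst (hinj heq)

end Folding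

/-- If there is a 2-D `(n × m, k, λ)`-OOC with `b` codewords and `m = m₁m₂`, then there is
a 2-D `(nm₁ × m₂, k, λ)`-OOC with `m₁b` codewords. -/
theorem ooc_factorization (n m m₁ m₂ k lam : ℕ) (hm : m = m₁ * m₂)
    (C : Multiset (Finset (Fin n × ZMod m))) (h : IsOOC n m k lam C) :
    ∃ C' : Multiset (Finset (Fin (n * m₁) × ZMod m₂)),
      IsOOC (n * m₁) m₂ k lam C' ∧ Multiset.card C' = m₁ * Multiset.card C := by
  subst hm
  by_cases hm₁ : m₁ = 0
  · subst hm₁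
    exact ⟨0, ⟨by simp, by simp, by simp⟩, by simp⟩
  · exact ⟨foldedCode hm₁ C, h.foldedCode hm₁, card_foldedCode hm₁ C⟩
end
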